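/- arXiv:1707.08318 — 2 statements merged into one kernel-verified Lean document; each statement's English description precedes it below -/
import Mathlib

section
/- Let b be a connected, canonically compactifiable graph over a finite discrete measure space (X,m). Then there exists a constant C > 0 such that ‖u‖_∞ ≤ C ‖u‖_Q for every u ∈ D(Q). -/
open scoped BigOperators

/-- `u` is square-summable with respect to the measure `m`, i.e. `u ∈ ℓ²(X,m)`. -/
def MemL2 {X : Type*} (m : X → ℝ) (u : X → ℝ) : Prop :=
  Summable (fun x => u x ^ 2 * m x)

/-- `u` has finite energy: the sum defining `Q̃(u)` converges. -/
def FinEnergy {X : Type*} (b : X → X → ℝ) (u : X → ℝ) : Prop :=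
  Summable (fun p : X × X => b p.1 p.2 * (u p.1 - u p.2) ^ 2)

/-- The energy `Q(u) = (1/2) Σ_{x,y} b(x,y) (u(x) - u(y))²`. -/
noncomputable def energy {X : Type*} (b : X → X → ℝ) (u : X → ℝ) : ℝ :=
  (1 / 2) * ∑' p : X × X, b p.1 p.2 * (u p.1 - u p.2) ^ 2

/-- The bilinear energy form `Q(u,v) = (1/2) Σ_{x,y} b(x,y)(u(x)-u(y))(v(x)-v(y))`. -/
noncomputable def energyBil {X : Type*} (b : X → X → ℝ) (u v : X → ℝ) : ℝ :=
  (1 / 2) * ∑' p : X × X, b p.1 p.2 * (u p.1 - u p.2) * (v p.1 - v p.2)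

/-- The form domain `D(Q) = ℓ²(X,m) ∩ D̃`. -/
def MemDQ {X : Type*} (b : X → X → ℝ) (m : X → ℝ) (u : X → ℝ) : Prop :=
  MemL2 m u ∧ FinEnergy b u

/-- The form norm `‖u‖_Q = (Q(u) + ‖u‖₂²)^{1/2}`. -/
noncomputable def formNorm {X : Type*} (b : X → X → ℝ) (m : X → ℝ) (u : X → ℝ) : ℝ :=
  Real.sqrt (energy b u + ∑' x, u x ^ 2 * m x)

/-- `b` is a graph over `X`: symmetric, nonnegative, zero on the diagonal,
with summable rows. -/
structure IsGraph {X : Type*} (b : X → X → ℝ) : Prop where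
  symm : ∀ x y, b x y = b y x
  nonneg : ∀ x y, 0 ≤ b x y
  diag : ∀ x, b x x = 0
  row_summable : ∀ x, Summable (fun y => b x y)

/-- The graph `b` is connected: any two points are joined by a path of edges of
positive weight. -/
def GraphConnected {X : Type*} (b : X → X → ℝ) : Prop :=
  ∀ x y : X, Relation.ReflTransGen (fun a c => 0 < b a c) x y

/-- `(X,m)` is a finite discrete measure space: `m > 0` everywhere and `m(X) < ∞`. -/
structure FinMeasure {X : Type*} (m : X → ℝ) : Prop where
  pos : ∀ x, 0 < m x
  summable : Summable m

/-- The graph `b` over `(X,m)` is canonically compactifiable: every function in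
`D(Q)` is bounded. -/
def CanCompact {X : Type*} (b : X → X → ℝ) (m : X → ℝ) : Prop :=
  ∀ u : X → ℝ, MemDQ b m u → ∃ M : ℝ, ∀ x, |u x| ≤ M

/-- `u ∈ D(L)` with `L u = f` for the Neumann Laplacian `L`:
`u ∈ D(Q)`, `f ∈ ℓ²(X,m)` and `Q(u,v) = ⟨f,v⟩` for all `v ∈ D(Q)`. -/
def IsLap {X : Type*} (b : X → X → ℝ) (m : X → ℝ) (u f : X → ℝ) : Prop :=
  MemDQ b m u ∧ MemL2 m f ∧
    ∀ v : X → ℝ, MemDQ b m v → energyBil b u v = ∑' x, f x * v x * m x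

/-- The mean `ū = ⟨u,1⟩ / m(X)`. -/
noncomputable def mean {X : Type*} (m : X → ℝ) (u : X → ℝ) : ℝ :=
  (∑' x, u x * m x) / (∑' x, m x)



open Filter Topology

private lemma finset_sq_sum_le {ι : Type*} (F : Finset ι) (w : ι → ℝ) (hw : ∀ i, 0 ≤ w i)
    (N : ℕ) (h : ℕ → ι → ℝ)
    (hs : ∀ n, Summable (fun i => w i * h n i ^ 2)) :
    ∑ i ∈ F, w i * (∑ n ∈ Finset.range N, h n i) ^ 2
      ≤ (∑ n ∈ Finset.range N, Real.sqrt (∑' i, w i * h n i ^ 2)) ^ 2 := by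
  classical
  set v : ℕ → EuclideanSpace ℝ F := fun n => WithLp.toLp 2 (fun i : F => Real.sqrt (w i.1) * h n i.1) with hv
  have hnorm : ∀ n, ‖v n‖ ≤ Real.sqrt (∑' i, w i * h n i ^ 2) := by
    intro n
    rw [EuclideanSpace.norm_eq]
    apply Real.sqrt_le_sqrt
    have h1 : ∀ i : F, ‖v n i‖ ^ 2 = w i.1 * h n i.1 ^ 2 := by
      intro i
      simp only [hv, Real.norm_eq_abs, sq_abs, mul_pow, Real.sq_sqrt (hw i.1)]
    calc ∑ i : F, ‖v n i‖ ^ 2 = ∑ i : F, w i.1 * h n i.1 ^ 2 :=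
          Finset.sum_congr rfl fun i _ => h1 i
      _ = ∑ i ∈ F, w i * h n i ^ 2 := Finset.sum_coe_sort F (fun i => w i * h n i ^ 2)
      _ ≤ ∑' i, w i * h n i ^ 2 :=
          Summable.sum_le_tsum F (fun i _ => mul_nonneg (hw i) (sq_nonneg _)) (hs n)
  have hsum : ∑ i ∈ F, w i * (∑ n ∈ Finset.range N, h n i) ^ 2
      = ‖∑ n ∈ Finset.range N, v n‖ ^ 2 := by
    rw [EuclideanSpace.norm_eq, Real.sq_sqrt (Finset.sum_nonneg fun i _ => sq_nonneg _)]
    rw [← Finset.sum_coe_sort F (fun i => w i * (∑ n ∈ Finset.range N, h n i) ^ 2)]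
    refine Finset.sum_congr rfl fun i _ => ?_
    have : (∑ n ∈ Finset.range N, v n) i = ∑ n ∈ Finset.range N, v n i := by
      rw [WithLp.ofLp_sum]; exact Finset.sum_apply i (Finset.range N) _
    rw [this]
    simp only [hv, Real.norm_eq_abs, sq_abs, ← Finset.mul_sum]
    rw [mul_pow, Real.sq_sqrt (hw i.1)]
  rw [hsum]
  have h2 : ‖∑ n ∈ Finset.range N, v n‖ ≤ ∑ n ∈ Finset.range N, Real.sqrt (∑' i, w i * h n i ^ 2) :=
    (norm_sum_le _ _).trans (Finset.sum_le_sum fun n _ => hnorm n)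
  exact pow_le_pow_left₀ (norm_nonneg _) h2 2

private lemma key_summable {ι : Type*} (w : ι → ℝ) (hw : ∀ i, 0 ≤ w i) (h : ℕ → ι → ℝ)
    (hs : ∀ n, Summable fun i => w i * h n i ^ 2) (B : ℝ)
    (hB : ∀ N, ∑ n ∈ Finset.range N, Real.sqrt (∑' i, w i * h n i ^ 2) ≤ B)
    (g : ι → ℝ)
    (hg : ∀ i, Filter.Tendsto (fun N => ∑ n ∈ Finset.range N, h n i) Filter.atTop (nhds (g i))) :
    Summable fun i => w i * g i ^ 2 := by
  apply summable_of_sum_le (c := B ^ 2) (fun i => mul_nonneg (hw i) (sq_nonneg _))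
  intro F
  have hten : Tendsto (fun N => ∑ i ∈ F, w i * (∑ n ∈ Finset.range N, h n i) ^ 2) atTop
      (nhds (∑ i ∈ F, w i * g i ^ 2)) := by
    apply tendsto_finset_sum
    intro i _
    exact ((hg i).pow 2).const_mul _
  refine le_of_tendsto hten (Filter.Eventually.of_forall fun N => ?_)
  have hBnn : 0 ≤ B := le_trans (by simp) (hB 0)
  calc ∑ i ∈ F, w i * (∑ n ∈ Finset.range N, h n i) ^ 2
      ≤ (∑ n ∈ Finset.range N, Real.sqrt (∑' i, w i * h n i ^ 2)) ^ 2 :=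
        finset_sq_sum_le F w hw N h hs
    _ ≤ B ^ 2 := pow_le_pow_left₀ (Finset.sum_nonneg fun n _ => Real.sqrt_nonneg _) (hB N) 2

section Helpers

variable {X : Type*}

private lemma energy_nonneg (b : X → X → ℝ) (hb : IsGraph b) (u : X → ℝ) :
    0 ≤ energy b u :=
  mul_nonneg (by norm_num)
    (tsum_nonneg fun p => mul_nonneg (hb.nonneg _ _) (sq_nonneg _))

private lemma l2_nonneg (m : X → ℝ) (hm : FinMeasure m) (u : X → ℝ) :
    0 ≤ ∑' x, u x ^ 2 * m x :=
  tsum_nonneg fun x => mul_nonneg (sq_nonneg _) (hm.pos x).le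

private lemma formNorm_sq (b : X → X → ℝ) (m : X → ℝ) (hb : IsGraph b) (hm : FinMeasure m)
    (u : X → ℝ) :
    formNorm b m u ^ 2 = energy b u + ∑' x, u x ^ 2 * m x := by
  exact Real.sq_sqrt (add_nonneg (energy_nonneg b hb u) (l2_nonneg m hm u))

private lemma l2_le_formNorm_sq (b : X → X → ℝ) (m : X → ℝ) (hb : IsGraph b) (hm : FinMeasure m)
    (u : X → ℝ) :
    ∑' x, u x ^ 2 * m x ≤ formNorm b m u ^ 2 := by
  rw [formNorm_sq b m hb hm u]
  linarith [energy_nonneg b hb u]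

private lemma pointwise_bound (b : X → X → ℝ) (m : X → ℝ) (hb : IsGraph b) (hm : FinMeasure m)
    {u : X → ℝ} (hu : MemL2 m u) (x : X) :
    |u x| * Real.sqrt (m x) ≤ formNorm b m u := by
  have hS : u x ^ 2 * m x ≤ ∑' y, u y ^ 2 * m y :=
    Summable.le_tsum hu x (fun y _ => mul_nonneg (sq_nonneg _) (hm.pos y).le)
  have h2 : u x ^ 2 * m x ≤ formNorm b m u ^ 2 :=
    hS.trans (l2_le_formNorm_sq b m hb hm u)
  calc |u x| * Real.sqrt (m x) = Real.sqrt (u x ^ 2 * m x) := by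
        rw [Real.sqrt_mul (sq_nonneg _), Real.sqrt_sq_eq_abs]
    _ ≤ Real.sqrt (formNorm b m u ^ 2) := Real.sqrt_le_sqrt h2
    _ = formNorm b m u := Real.sqrt_sq (Real.sqrt_nonneg _)

end Helpers

/-- Sobolev-type embedding into `ℓ^∞`:
there is `C > 0` with `‖u‖_∞ ≤ C ‖u‖_Q` for all `u ∈ D(Q)`. -/
theorem stmt0 {X : Type*} [Countable X] (b : X → X → ℝ) (m : X → ℝ)
    (hb : IsGraph b) (hconn : GraphConnected b) (hm : FinMeasure m)
    (hcc : CanCompact b m) :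
    ∃ C > (0 : ℝ), ∀ u : X → ℝ, MemDQ b m u → ∀ x, |u x| ≤ C * formNorm b m u := by
  by_contra hcon
  push_neg at hcon
  have hsel : ∀ n : ℕ, ∃ u : X → ℝ, MemDQ b m u ∧
      ∃ x, (4 : ℝ) ^ n * formNorm b m u < |u x| := fun n =>
    hcon ((4 : ℝ) ^ n) (by positivity)
  choose U hU xs hxs using hsel
  -- the form norm of each `U n` is positive
  have hfNnn : ∀ n, 0 ≤ formNorm b m (U n) := fun n => Real.sqrt_nonneg _
  have hpos : ∀ n, 0 < formNorm b m (U n) := by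
    intro n
    rcases (hfNnn n).lt_or_eq with h | h
    · exact h
    · exfalso
      have h1 : (0 : ℝ) < |U n (xs n)| := lt_of_le_of_lt (by positivity) (by
        simpa [← h] using hxs n)
      have h2 : |U n (xs n)| * Real.sqrt (m (xs n)) ≤ 0 := by
        have h2' := pointwise_bound b m hb hm (hU n).1 (xs n)
        rwa [← h] at h2'
      have h3 : 0 < Real.sqrt (m (xs n)) := Real.sqrt_pos.mpr (hm.pos _)
      nlinarith
  -- the normalized, absolute-value functions
  set c : ℕ → ℝ := fun n => (1 / 2 : ℝ) ^ n / formNorm b m (U n) with hc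
  have hcpos : ∀ n, 0 < c n := fun n => div_pos (by positivity) (hpos n)
  set f : ℕ → X → ℝ := fun n x => c n * |U n x| with hf
  have hfnonneg : ∀ n x, 0 ≤ f n x := fun n x => mul_nonneg (hcpos n).le (abs_nonneg _)
  -- ℓ² facts
  have hfL2 : ∀ n, Summable (fun x => m x * f n x ^ 2) := by
    intro n
    refine ((hU n).1.mul_left (c n ^ 2)).congr fun x => ?_
    simp only [hf, mul_pow, sq_abs]; ring
  have hfL2tsum : ∀ n, ∑' x, m x * f n x ^ 2 ≤ ((1 / 2 : ℝ) ^ n) ^ 2 := by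
    intro n
    have h1 : ∀ x, m x * f n x ^ 2 = c n ^ 2 * (U n x ^ 2 * m x) := by
      intro x; simp only [hf, mul_pow, sq_abs]; ring
    calc ∑' x, m x * f n x ^ 2 = c n ^ 2 * ∑' x, U n x ^ 2 * m x := by
          rw [← tsum_mul_left]; exact tsum_congr h1
      _ ≤ c n ^ 2 * formNorm b m (U n) ^ 2 := by
          apply mul_le_mul_of_nonneg_left (l2_le_formNorm_sq b m hb hm (U n)) (sq_nonneg _)
      _ = ((1 / 2 : ℝ) ^ n) ^ 2 := by
          simp only [hc, div_pow]
          exact div_mul_cancel₀ _ (pow_ne_zero 2 (hpos n).ne')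
  -- energy facts
  have hEcomp : ∀ n (p : X × X),
      b p.1 p.2 * (f n p.1 - f n p.2) ^ 2
        ≤ c n ^ 2 * (b p.1 p.2 * (U n p.1 - U n p.2) ^ 2) := by
    intro n p
    have h1 : (|U n p.1| - |U n p.2|) ^ 2 ≤ (U n p.1 - U n p.2) ^ 2 := by
      rw [← sq_abs (|U n p.1| - |U n p.2|), ← sq_abs (U n p.1 - U n p.2)]
      exact pow_le_pow_left₀ (abs_nonneg _) (abs_abs_sub_abs_le_abs_sub _ _) 2
    have h2 : (f n p.1 - f n p.2) ^ 2 = c n ^ 2 * (|U n p.1| - |U n p.2|) ^ 2 := by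
      simp only [hf]; ring
    rw [h2]
    have := mul_le_mul_of_nonneg_left h1 (sq_nonneg (c n))
    nlinarith [hb.nonneg p.1 p.2, sq_nonneg (U n p.1 - U n p.2), sq_nonneg (c n),
      mul_le_mul_of_nonneg_left this (hb.nonneg p.1 p.2)]
  have hfE : ∀ n, Summable (fun p : X × X => b p.1 p.2 * (f n p.1 - f n p.2) ^ 2) := by
    intro n
    refine Summable.of_nonneg_of_le
      (fun p => mul_nonneg (hb.nonneg _ _) (sq_nonneg _)) (hEcomp n)
      ((hU n).2.mul_left (c n ^ 2))
  have hfEtsum : ∀ n, ∑' p : X × X, b p.1 p.2 * (f n p.1 - f n p.2) ^ 2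
      ≤ 2 * ((1 / 2 : ℝ) ^ n) ^ 2 := by
    intro n
    have h1 : ∑' p : X × X, b p.1 p.2 * (f n p.1 - f n p.2) ^ 2
        ≤ c n ^ 2 * ∑' p : X × X, b p.1 p.2 * (U n p.1 - U n p.2) ^ 2 := by
      rw [← tsum_mul_left]
      exact Summable.tsum_le_tsum (hEcomp n) (hfE n) ((hU n).2.mul_left (c n ^ 2))
    have h2 : ∑' p : X × X, b p.1 p.2 * (U n p.1 - U n p.2) ^ 2 = 2 * energy b (U n) := by
      rw [energy]; ring
    have h3 : energy b (U n) ≤ formNorm b m (U n) ^ 2 := by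
      rw [formNorm_sq b m hb hm (U n)]
      linarith [l2_nonneg m hm (U n)]
    have h4 : c n ^ 2 * formNorm b m (U n) ^ 2 = ((1 / 2 : ℝ) ^ n) ^ 2 := by
      simp only [hc, div_pow]
      exact div_mul_cancel₀ _ (pow_ne_zero 2 (hpos n).ne')
    calc ∑' p : X × X, b p.1 p.2 * (f n p.1 - f n p.2) ^ 2
        ≤ c n ^ 2 * (2 * energy b (U n)) := by rw [← h2]; exact h1
      _ ≤ 2 * ((1 / 2 : ℝ) ^ n) ^ 2 := by nlinarith [sq_nonneg (c n)]
  -- summability of the series defining `u`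
  have hgeo : Summable (fun n : ℕ => (1 / 2 : ℝ) ^ n) :=
    summable_geometric_of_lt_one (by norm_num) (by norm_num)
  have hgeo_tsum : ∑' n : ℕ, (1 / 2 : ℝ) ^ n = 2 := by
    rw [tsum_geometric_of_lt_one (by norm_num) (by norm_num)]; norm_num
  have hfbound : ∀ n x, f n x ≤ (1 / 2 : ℝ) ^ n * (Real.sqrt (m x))⁻¹ := by
    intro n x
    have h1 : m x * f n x ^ 2 ≤ ((1 / 2 : ℝ) ^ n) ^ 2 :=
      (Summable.le_tsum (hfL2 n) x fun y _ => mul_nonneg (hm.pos y).le (sq_nonneg _)).trans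
        (hfL2tsum n)
    have h2 : f n x * Real.sqrt (m x) ≤ (1 / 2 : ℝ) ^ n := by
      have e : (f n x * Real.sqrt (m x)) ^ 2 = m x * f n x ^ 2 := by
        rw [mul_pow, Real.sq_sqrt (hm.pos x).le]; ring
      calc f n x * Real.sqrt (m x)
          = Real.sqrt ((f n x * Real.sqrt (m x)) ^ 2) :=
            (Real.sqrt_sq (mul_nonneg (hfnonneg n x) (Real.sqrt_nonneg _))).symm
        _ = Real.sqrt (m x * f n x ^ 2) := by rw [e]
        _ ≤ Real.sqrt (((1 / 2 : ℝ) ^ n) ^ 2) := Real.sqrt_le_sqrt h1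
        _ = (1 / 2 : ℝ) ^ n := Real.sqrt_sq (by positivity)
    have h3 : 0 < Real.sqrt (m x) := Real.sqrt_pos.mpr (hm.pos x)
    rw [← le_div_iff₀ h3] at h2
    simpa [div_eq_mul_inv] using h2
  have hsumf : ∀ x, Summable fun n => f n x := by
    intro x
    exact Summable.of_nonneg_of_le (fun n => hfnonneg n x) (fun n => hfbound n x)
      (hgeo.mul_right _)
  set u : X → ℝ := fun x => ∑' n, f n x with hu'
  have htends : ∀ x, Filter.Tendsto (fun N => ∑ n ∈ Finset.range N, f n x)
      Filter.atTop (nhds (u x)) := fun x => (hsumf x).hasSum.tendsto_sum_nat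
  -- `u ∈ ℓ²`
  have huL2 : MemL2 m u := by
    have := key_summable m (fun x => (hm.pos x).le) f hfL2 2
      (fun N => ?_) u htends
    · exact this.congr fun x => mul_comm _ _
    · calc ∑ n ∈ Finset.range N, Real.sqrt (∑' x, m x * f n x ^ 2)
          ≤ ∑ n ∈ Finset.range N, (1 / 2 : ℝ) ^ n := by
            refine Finset.sum_le_sum fun n _ => ?_
            have := Real.sqrt_le_sqrt (hfL2tsum n)
            rwa [Real.sqrt_sq (by positivity)] at this
        _ ≤ ∑' n : ℕ, (1 / 2 : ℝ) ^ n :=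
            Summable.sum_le_tsum _ (fun n _ => by positivity) hgeo
        _ = 2 := hgeo_tsum
  -- `u` has finite energy
  have huE : FinEnergy b u := by
    have key := key_summable (fun p : X × X => b p.1 p.2) (fun p => hb.nonneg _ _)
      (fun n p => f n p.1 - f n p.2) hfE 4 (fun N => ?_)
      (fun p => u p.1 - u p.2) (fun p => ?_)
    · exact key
    · calc ∑ n ∈ Finset.range N,
            Real.sqrt (∑' p : X × X, b p.1 p.2 * (f n p.1 - f n p.2) ^ 2)
          ≤ ∑ n ∈ Finset.range N, 2 * (1 / 2 : ℝ) ^ n := by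
            refine Finset.sum_le_sum fun n _ => ?_
            have h1 := Real.sqrt_le_sqrt (hfEtsum n)
            refine h1.trans ?_
            rw [show (2 : ℝ) * ((1 / 2 : ℝ) ^ n) ^ 2 = (Real.sqrt 2 * (1 / 2 : ℝ) ^ n) ^ 2 by
              rw [mul_pow, Real.sq_sqrt (by norm_num : (0:ℝ) ≤ 2)],
              Real.sqrt_sq (by positivity)]
            have h2 : Real.sqrt 2 ≤ 2 := by
              nlinarith [Real.sq_sqrt (show (0:ℝ) ≤ 2 by norm_num), Real.sqrt_nonneg 2]
            have : (0:ℝ) ≤ (1/2:ℝ) ^ n := by positivity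
            nlinarith
        _ = 2 * ∑ n ∈ Finset.range N, (1 / 2 : ℝ) ^ n := by rw [Finset.mul_sum]
        _ ≤ 2 * ∑' n : ℕ, (1 / 2 : ℝ) ^ n := by
            have := Summable.sum_le_tsum (Finset.range N) (fun n _ => by positivity : ∀ n ∉ Finset.range N, (0:ℝ) ≤ (1/2:ℝ)^n) hgeo
            linarith
        _ = 4 := by rw [hgeo_tsum]; norm_num
    · have h1 : Filter.Tendsto (fun N => ∑ n ∈ Finset.range N, f n p.1) Filter.atTop
          (nhds (u p.1)) := htends p.1
      have h2 : Filter.Tendsto (fun N => ∑ n ∈ Finset.range N, f n p.2) Filter.atTop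
          (nhds (u p.2)) := htends p.2
      have := h1.sub h2
      refine this.congr fun N => ?_
      rw [Finset.sum_sub_distrib]
  -- `u ∈ D(Q)`, so it is bounded
  obtain ⟨M, hM⟩ := hcc u ⟨huL2, huE⟩
  obtain ⟨n, hn⟩ := pow_unbounded_of_one_lt M (one_lt_two (α := ℝ))
  -- but `u (xs n) > 2 ^ n`
  have h1 : (2 : ℝ) ^ n < f n (xs n) := by
    have h2 : c n * ((4 : ℝ) ^ n * formNorm b m (U n)) < c n * |U n (xs n)| :=
      mul_lt_mul_of_pos_left (hxs n) (hcpos n)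
    have h3 : c n * ((4 : ℝ) ^ n * formNorm b m (U n)) = (2 : ℝ) ^ n := by
      have e : ((1 / 2 : ℝ)) ^ n * (4 : ℝ) ^ n = (2 : ℝ) ^ n := by
        rw [← mul_pow]; norm_num
      simp only [hc]
      calc (1 / 2 : ℝ) ^ n / formNorm b m (U n) * ((4 : ℝ) ^ n * formNorm b m (U n))
          = (1 / 2 : ℝ) ^ n * (4 : ℝ) ^ n
              * (formNorm b m (U n) / formNorm b m (U n)) := by ring
        _ = (1 / 2 : ℝ) ^ n * (4 : ℝ) ^ n := by rw [div_self (hpos n).ne']; ring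
        _ = (2 : ℝ) ^ n := e
    simpa [hf, h3] using h2
  have h4 : f n (xs n) ≤ u (xs n) :=
    Summable.le_tsum (hsumf (xs n)) n fun k _ => hfnonneg k (xs n)
  have h5 : u (xs n) ≤ M := (le_abs_self _).trans (hM (xs n))
  linarith
end

section
/- Let b be a connected, canonically compactifiable graph over a finite discrete measure space (X,m). Then the embedding of (D(Q), ‖·‖_Q) into ℓ²(X,m) is compact: every sequence (uₙ) in D(Q) with sup_n ‖uₙ‖_Q < ∞ has a subsequence that converges in the ℓ²(X,m)-norm to some u ∈ ℓ²(X,m). -/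
open scoped BigOperators
open Filter Topology

section AuxCE
variable {X : Type*} {b : X → X → ℝ} {m : X → ℝ}

lemma energyCE_nonneg (hb : IsGraph b) (u : X → ℝ) : 0 ≤ energy b u :=
  mul_nonneg (by norm_num) (tsum_nonneg fun p => mul_nonneg (hb.nonneg _ _) (sq_nonneg _))

lemma l2CE_nonneg (hm : FinMeasure m) (u : X → ℝ) : 0 ≤ ∑' x, u x ^ 2 * m x :=
  tsum_nonneg fun x => mul_nonneg (sq_nonneg _) (hm.pos x).le

lemma formNormCE_nonneg (u : X → ℝ) : 0 ≤ formNorm b m u := Real.sqrt_nonneg _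

lemma sq_formNormCE (hb : IsGraph b) (hm : FinMeasure m) (u : X → ℝ) :
    formNorm b m u ^ 2 = energy b u + ∑' x, u x ^ 2 * m x :=
  Real.sq_sqrt (add_nonneg (energyCE_nonneg hb u) (l2CE_nonneg hm u))

lemma l2CE_le (hb : IsGraph b) (hm : FinMeasure m) (u : X → ℝ) :
    ∑' x, u x ^ 2 * m x ≤ formNorm b m u ^ 2 := by
  rw [sq_formNormCE hb hm]
  exact le_add_of_nonneg_left (energyCE_nonneg hb u)

lemma energyCE_le (hb : IsGraph b) (hm : FinMeasure m) (u : X → ℝ) :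
    (∑' p : X × X, b p.1 p.2 * (u p.1 - u p.2) ^ 2) ≤ 2 * formNorm b m u ^ 2 := by
  rw [sq_formNormCE hb hm]
  have h := l2CE_nonneg hm u
  have : energy b u = (1/2) * ∑' p : X × X, b p.1 p.2 * (u p.1 - u p.2) ^ 2 := rfl
  linarith [this ▸ le_refl (energy b u)]

lemma pointCE_sq (hb : IsGraph b) (hm : FinMeasure m) {u : X → ℝ} (hu : MemL2 m u) (x : X) :
    u x ^ 2 * m x ≤ formNorm b m u ^ 2 :=
  (Summable.le_tsum hu x fun j _ => mul_nonneg (sq_nonneg _) (hm.pos j).le).trans (l2CE_le hb hm u)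

lemma absCE_le (hb : IsGraph b) (hm : FinMeasure m) {u : X → ℝ} (hu : MemL2 m u) (x : X) :
    |u x| ≤ Real.sqrt ((m x)⁻¹) * formNorm b m u := by
  have h1 : u x ^ 2 * m x ≤ formNorm b m u ^ 2 := pointCE_sq hb hm hu x
  have hmx := hm.pos x
  have h2 : u x ^ 2 ≤ (m x)⁻¹ * formNorm b m u ^ 2 := by
    rw [inv_mul_eq_div, le_div_iff₀ hmx]; linarith
  calc |u x| = Real.sqrt (u x ^ 2) := (Real.sqrt_sq_eq_abs _).symm
    _ ≤ Real.sqrt ((m x)⁻¹ * formNorm b m u ^ 2) := Real.sqrt_le_sqrt h2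
    _ = Real.sqrt ((m x)⁻¹) * formNorm b m u := by
        rw [Real.sqrt_mul (by positivity), Real.sqrt_sq (formNormCE_nonneg u)]

lemma eqzeroCE (hb : IsGraph b) (hm : FinMeasure m) {u : X → ℝ} (hu : MemL2 m u)
    (h : formNorm b m u = 0) (x : X) : u x = 0 := by
  have h1 := pointCE_sq hb hm hu x
  rw [h] at h1
  have hmx := hm.pos x
  have h2 : u x ^ 2 * m x = 0 :=
    le_antisymm (by simpa using h1) (mul_nonneg (sq_nonneg _) hmx.le)
  rcases mul_eq_zero.1 h2 with h3 | h3
  · exact pow_eq_zero_iff two_ne_zero |>.mp h3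
  · exact absurd h3 hmx.ne'

lemma memDQCE_zero : MemDQ b m (fun _ => (0:ℝ)) := by
  constructor
  · have : (fun x : X => (0:ℝ) ^ 2 * m x) = fun _ => 0 := by funext x; ring
    rw [MemL2, this]; exact summable_zero
  · have : (fun p : X × X => b p.1 p.2 * ((0:ℝ) - 0) ^ 2) = fun _ => 0 := by funext p; ring
    rw [FinEnergy, this]; exact summable_zero

lemma formNormCE_zero : formNorm b m (fun _ => (0:ℝ)) = 0 := by
  have h1 : (fun x : X => (0:ℝ) ^ 2 * m x) = fun _ => 0 := by funext x; ring
  have h2 : (fun p : X × X => b p.1 p.2 * ((0:ℝ) - 0) ^ 2) = fun _ => 0 := by funext p; ring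
  rw [formNorm, energy, h1, h2, tsum_zero, tsum_zero, mul_zero, add_zero, Real.sqrt_zero]

lemma MemDQ.smulCE {u : X → ℝ} (hu : MemDQ b m u) (a : ℝ) :
    MemDQ b m (fun y => a * u y) := by
  constructor
  · exact (hu.1.mul_left (a ^ 2)).congr fun x => by ring
  · exact (hu.2.mul_left (a ^ 2)).congr fun p => by ring

lemma formNormCE_smul (u : X → ℝ) (a : ℝ) :
    formNorm b m (fun y => a * u y) = |a| * formNorm b m u := by
  have h1 : (fun x : X => (a * u x) ^ 2 * m x) = fun x => a ^ 2 * (u x ^ 2 * m x) := by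
    funext x; ring
  have h2 : (fun p : X × X => b p.1 p.2 * (a * u p.1 - a * u p.2) ^ 2)
      = fun p => a ^ 2 * (b p.1 p.2 * (u p.1 - u p.2) ^ 2) := by funext p; ring
  rw [formNorm, energy, h1, h2, tsum_mul_left, tsum_mul_left]
  rw [show (1/2 : ℝ) * (a ^ 2 * ∑' p : X × X, b p.1 p.2 * (u p.1 - u p.2) ^ 2)
      + a ^ 2 * ∑' x, u x ^ 2 * m x
      = a ^ 2 * (energy b u + ∑' x, u x ^ 2 * m x) by rw [energy]; ring]
  rw [Real.sqrt_mul (sq_nonneg a), Real.sqrt_sq_eq_abs, formNorm]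

lemma MemDQ.addCE (hb : IsGraph b) (hm : FinMeasure m) {u v : X → ℝ}
    (hu : MemDQ b m u) (hv : MemDQ b m v) : MemDQ b m (fun y => u y + v y) := by
  constructor
  · apply Summable.of_nonneg_of_le
      (fun x => mul_nonneg (sq_nonneg _) (hm.pos x).le)
      (fun x => ?_) ((hu.1.mul_left 2).add (hv.1.mul_left 2))
    have h := hm.pos x
    nlinarith [sq_nonneg (u x - v x)]
  · apply Summable.of_nonneg_of_le
      (fun p => mul_nonneg (hb.nonneg _ _) (sq_nonneg _))
      (fun p => ?_) ((hu.2.mul_left 2).add (hv.2.mul_left 2))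
    have h := hb.nonneg p.1 p.2
    dsimp only
    nlinarith [mul_nonneg h (sq_nonneg ((u p.1 - u p.2) - (v p.1 - v p.2)))]

lemma formNormCE_add_le (hb : IsGraph b) (hm : FinMeasure m) {u v : X → ℝ}
    (hu : MemDQ b m u) (hv : MemDQ b m v) :
    formNorm b m (fun y => u y + v y) ≤
      Real.sqrt 2 * (formNorm b m u + formNorm b m v) := by
  have huv := MemDQ.addCE hb hm hu hv
  have hN : (∑' x, (u x + v x) ^ 2 * m x)
      ≤ 2 * (∑' x, u x ^ 2 * m x) + 2 * (∑' x, v x ^ 2 * m x) := by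
    have := Summable.tsum_le_tsum (f := fun x => (u x + v x) ^ 2 * m x)
      (g := fun x => 2 * (u x ^ 2 * m x) + 2 * (v x ^ 2 * m x))
      (fun x => by
        have h := hm.pos x
        nlinarith [mul_nonneg (sq_nonneg (u x - v x)) h.le])
      huv.1 ((hu.1.mul_left 2).add (hv.1.mul_left 2))
    rwa [Summable.tsum_add (hu.1.mul_left 2) (hv.1.mul_left 2), tsum_mul_left, tsum_mul_left] at this
  have hE : (∑' p : X × X, b p.1 p.2 * (u p.1 + v p.1 - (u p.2 + v p.2)) ^ 2)
      ≤ 2 * (∑' p : X × X, b p.1 p.2 * (u p.1 - u p.2) ^ 2)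
        + 2 * (∑' p : X × X, b p.1 p.2 * (v p.1 - v p.2) ^ 2) := by
    have := Summable.tsum_le_tsum
      (f := fun p : X × X => b p.1 p.2 * (u p.1 + v p.1 - (u p.2 + v p.2)) ^ 2)
      (g := fun p : X × X => 2 * (b p.1 p.2 * (u p.1 - u p.2) ^ 2)
        + 2 * (b p.1 p.2 * (v p.1 - v p.2) ^ 2))
      (fun p => by
        have h := hb.nonneg p.1 p.2
        nlinarith [mul_nonneg h (sq_nonneg ((u p.1 - u p.2) - (v p.1 - v p.2)))])
      huv.2 ((hu.2.mul_left 2).add (hv.2.mul_left 2))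
    rwa [Summable.tsum_add (hu.2.mul_left 2) (hv.2.mul_left 2), tsum_mul_left, tsum_mul_left] at this
  have hfu := formNormCE_nonneg (b := b) (m := m) u
  have hfv := formNormCE_nonneg (b := b) (m := m) v
  have hs2 : Real.sqrt 2 ^ 2 = 2 := Real.sq_sqrt (by norm_num)
  have hs2n : (0:ℝ) ≤ Real.sqrt 2 := Real.sqrt_nonneg 2
  have key : energy b (fun y => u y + v y) + ∑' x, (u x + v x) ^ 2 * m x
      ≤ (Real.sqrt 2 * (formNorm b m u + formNorm b m v)) ^ 2 := by
    have e1 : energy b (fun y => u y + v y)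
        = (1/2) * ∑' p : X × X, b p.1 p.2 * (u p.1 + v p.1 - (u p.2 + v p.2)) ^ 2 := rfl
    have e2 := sq_formNormCE hb hm u
    have e3 := sq_formNormCE hb hm v
    have e4 : energy b u = (1/2) * ∑' p : X × X, b p.1 p.2 * (u p.1 - u p.2) ^ 2 := rfl
    have e5 : energy b v = (1/2) * ∑' p : X × X, b p.1 p.2 * (v p.1 - v p.2) ^ 2 := rfl
    nlinarith [mul_nonneg hfu hfv]
  calc formNorm b m (fun y => u y + v y)
      = Real.sqrt (energy b (fun y => u y + v y) + ∑' x, (u x + v x) ^ 2 * m x) := rfl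
    _ ≤ Real.sqrt ((Real.sqrt 2 * (formNorm b m u + formNorm b m v)) ^ 2) :=
        Real.sqrt_le_sqrt key
    _ = Real.sqrt 2 * (formNorm b m u + formNorm b m v) :=
        Real.sqrt_sq (by positivity)

lemma fatouCE {ι : Type*} {f : ℕ → ι → ℝ} {g : ι → ℝ} {B : ℝ}
    (hnn : ∀ n i, 0 ≤ f n i) (hs : ∀ n, Summable (f n)) (hB : ∀ n, ∑' i, f n i ≤ B)
    (hlim : ∀ i, Tendsto (fun n => f n i) atTop (𝓝 (g i))) :
    Summable g ∧ ∑' i, g i ≤ B := by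
  have hgnn : ∀ i, 0 ≤ g i := fun i =>
    ge_of_tendsto' (hlim i) (fun n => hnn n i)
  have hF : ∀ F : Finset ι, ∑ i ∈ F, g i ≤ B := by
    intro F
    have h1 : Tendsto (fun n => ∑ i ∈ F, f n i) atTop (𝓝 (∑ i ∈ F, g i)) :=
      tendsto_finset_sum F fun i _ => hlim i
    refine le_of_tendsto h1 (Eventually.of_forall fun n => ?_)
    exact (Summable.sum_le_tsum F (fun i _ => hnn n i) (hs n)).trans (hB n)
  have hsg : Summable g := summable_of_sum_le hgnn hF
  exact ⟨hsg, Summable.tsum_le_of_sum_le hsg hF⟩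

end AuxCE

lemma uniformBoundCE {X : Type*} (b : X → X → ℝ) (m : X → ℝ)
    (hb : IsGraph b) (hm : FinMeasure m) (hcc : CanCompact b m) :
    ∃ C : ℝ, 0 ≤ C ∧ ∀ u : X → ℝ, MemDQ b m u → ∀ x, |u x| ≤ C * formNorm b m u := by
  classical
  by_contra hcon
  push_neg at hcon
  -- the sup of |w x| over the unit ball of the form norm
  set S : X → Set ℝ := fun x =>
    {t | ∃ w : X → ℝ, MemDQ b m w ∧ formNorm b m w ≤ 1 ∧ t = |w x|} with hS
  have hne : ∀ x, (S x).Nonempty := by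
    intro x
    exact ⟨0, ⟨fun _ => 0, memDQCE_zero, by rw [formNormCE_zero]; norm_num, by simp⟩⟩
  have hbdd : ∀ x, BddAbove (S x) := by
    intro x
    refine ⟨Real.sqrt ((m x)⁻¹), fun t ht => ?_⟩
    obtain ⟨w, hw1, hw2, rfl⟩ := ht
    calc |w x| ≤ Real.sqrt ((m x)⁻¹) * formNorm b m w := absCE_le hb hm hw1.1 x
      _ ≤ Real.sqrt ((m x)⁻¹) * 1 := by
          exact mul_le_mul_of_nonneg_left hw2 (Real.sqrt_nonneg _)
      _ = Real.sqrt ((m x)⁻¹) := mul_one _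
  set ν : X → ℝ := fun x => sSup (S x) with hν
  have hν0 : ∀ x, 0 ≤ ν x := by
    intro x
    refine le_csSup (hbdd x) ?_
    exact ⟨fun _ => 0, memDQCE_zero, by rw [formNormCE_zero]; norm_num, by simp⟩
  have hνb : ∀ u : X → ℝ, MemDQ b m u → ∀ x, |u x| ≤ ν x * formNorm b m u := by
    intro u hu x
    rcases eq_or_lt_of_le (formNormCE_nonneg (b := b) (m := m) u) with h0 | h0
    · rw [eqzeroCE hb hm hu.1 h0.symm x, ← h0]
      simp
    · set w : X → ℝ := fun y => (formNorm b m u)⁻¹ * u y with hw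
      have hwDQ : MemDQ b m w := hu.smulCE _
      have hwn : formNorm b m w = 1 := by
        rw [hw, formNormCE_smul, abs_of_pos (inv_pos.2 h0), inv_mul_cancel₀ h0.ne']
      have hmem : |w x| ∈ S x := ⟨w, hwDQ, hwn.le, rfl⟩
      have := le_csSup (hbdd x) hmem
      have hwx : |w x| = (formNorm b m u)⁻¹ * |u x| := by
        rw [hw]; rw [abs_mul, abs_of_pos (inv_pos.2 h0)]
      rw [hwx] at this
      calc |u x| = formNorm b m u * ((formNorm b m u)⁻¹ * |u x|) := by
            field_simp
        _ ≤ formNorm b m u * ν x := mul_le_mul_of_nonneg_left this h0.le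
        _ = ν x * formNorm b m u := mul_comm _ _
  have hνlarge : ∀ C : ℝ, ∃ x, C < ν x := by
    intro C
    obtain ⟨u, hu, x, hx⟩ := hcon (max C 0) (le_max_right _ _)
    have hf0 : 0 < formNorm b m u := by
      rcases eq_or_lt_of_le (formNormCE_nonneg (b := b) (m := m) u) with h0 | h0
      · exfalso
        have h1 := hνb u hu x
        rw [← h0, mul_zero] at h1
        rw [← h0, mul_zero] at hx
        linarith
      · exact h0
    have := hνb u hu x
    have hlt : max C 0 * formNorm b m u < ν x * formNorm b m u := lt_of_lt_of_le hx this
    have := (mul_lt_mul_iff_of_pos_right hf0).1 hlt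
    exact ⟨x, lt_of_le_of_lt (le_max_left C 0) this⟩
  -- choose points with huge ν and near-optimal unit-ball functions
  have hxex : ∀ n : ℕ, ∃ x : X, (2:ℝ) * 5 ^ n * (n + 2) < ν x := fun n => hνlarge _
  choose x hx using hxex
  have hwex : ∀ n : ℕ, ∃ w : X → ℝ,
      MemDQ b m w ∧ formNorm b m w ≤ 1 ∧ ν (x n) - 1 < |w (x n)| := by
    intro n
    obtain ⟨t, ht, hlt⟩ := exists_lt_of_lt_csSup (hne (x n)) (sub_one_lt (ν (x n)))
    obtain ⟨w, h1, h2, rfl⟩ := ht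
    exact ⟨w, h1, h2, hlt⟩
  choose w hw1 hw2 hw3 using hwex
  set c : ℕ → ℝ := fun j => (5:ℝ)⁻¹ ^ j with hc
  have hcpos : ∀ j, 0 < c j := fun j => pow_pos (by norm_num) j
  have hcsucc : ∀ j, c (j + 1) = 5⁻¹ * c j := fun j => pow_succ' _ _
  -- the recursively defined partial sums
  set s : ℕ → X → ℝ := fun n => Nat.rec (fun _ => (0:ℝ))
    (fun k sk => fun y => sk y +
      ((if c (k+1) * |w (k+1) (x (k+1))| ≤ |sk (x (k+1)) + c (k+1) * w (k+1) (x (k+1))|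
        then (1:ℝ) else -1) * c (k+1)) * w (k+1) y) n with hsdef
  have hs0 : s 0 = fun _ => (0:ℝ) := rfl
  have hssucc : ∀ k, s (k + 1) = fun y => s k y +
      ((if c (k+1) * |w (k+1) (x (k+1))| ≤ |s k (x (k+1)) + c (k+1) * w (k+1) (x (k+1))|
        then (1:ℝ) else -1) * c (k+1)) * w (k+1) y := fun k => rfl
  -- sign magnitude
  have habs_sign : ∀ k, |(if c (k+1) * |w (k+1) (x (k+1))|
      ≤ |s k (x (k+1)) + c (k+1) * w (k+1) (x (k+1))| then (1:ℝ) else -1)| = 1 := by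
    intro k; split <;> simp
  -- membership in D(Q)
  have hsDQ : ∀ n, MemDQ b m (s n) := by
    intro n
    induction n with
    | zero => exact memDQCE_zero
    | succ k ih =>
        rw [hssucc k]
        exact MemDQ.addCE hb hm ih ((hw1 (k+1)).smulCE _)
  -- main lower bound at the chosen points
  have hmain : ∀ k, c (k+1) * |w (k+1) (x (k+1))| ≤ |s (k+1) (x (k+1))| := by
    intro k
    have := hssucc k
    set a := s k (x (k+1)) with ha
    set t := c (k+1) * w (k+1) (x (k+1)) with ht
    have hval : s (k+1) (x (k+1)) =
        a + (if c (k+1) * |w (k+1) (x (k+1))| ≤ |a + t| then (1:ℝ) else -1) * t := by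
      rw [hssucc k]; ring
    have htabs : |t| = c (k+1) * |w (k+1) (x (k+1))| := by
      rw [ht, abs_mul, abs_of_pos (hcpos (k+1))]
    by_cases hcase : c (k+1) * |w (k+1) (x (k+1))| ≤ |a + t|
    · rw [hval, if_pos hcase, one_mul]; exact hcase
    · rw [hval, if_neg hcase, neg_one_mul]
      push_neg at hcase
      have h2t : |2 * t| ≤ |a + t| + |a + -t| := by
        calc |2 * t| = |(a + t) - (a + -t)| := by ring_nf
          _ ≤ |a + t| + |a + -t| := abs_sub _ _
      rw [abs_mul] at h2t
      simp only [abs_two] at h2t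
      rw [← htabs]
      rw [htabs] at *
      linarith [hcase, h2t]
  -- gap estimate
  have hgap : ∀ g n, formNorm b m (fun y => s (n + g) y - s n y) ≤ c n / 2 ∧
      MemDQ b m (fun y => s (n + g) y - s n y) := by
    intro g
    induction g with
    | zero =>
        intro n
        have hz : (fun y => s (n + 0) y - s n y) = fun _ => (0:ℝ) := by
          funext y; simp
        rw [hz]
        exact ⟨by rw [formNormCE_zero]; positivity, memDQCE_zero⟩
    | succ g ih =>
        intro n
        set κ := (if c (n+1) * |w (n+1) (x (n+1))|
          ≤ |s n (x (n+1)) + c (n+1) * w (n+1) (x (n+1))| then (1:ℝ) else -1) * c (n+1) with hκ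
        have hδ : (fun y => s (n + (g+1)) y - s n y)
            = fun y => (s ((n+1) + g) y - s (n+1) y) + κ * w (n+1) y := by
          funext y
          have h1 : n + (g + 1) = (n + 1) + g := by omega
          rw [h1, hssucc n]
          dsimp only
          rw [← hκ]
          ring
        have hA := ih (n + 1)
        have hBDQ : MemDQ b m (fun y => κ * w (n+1) y) := (hw1 (n+1)).smulCE _
        have hBn : formNorm b m (fun y => κ * w (n+1) y) ≤ c (n+1) := by
          rw [formNormCE_smul]
          have : |κ| = c (n+1) := by
            rw [hκ, abs_mul, habs_sign n, one_mul, abs_of_pos (hcpos (n+1))]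
          rw [this]
          calc c (n+1) * formNorm b m (w (n+1)) ≤ c (n+1) * 1 :=
              mul_le_mul_of_nonneg_left (hw2 (n+1)) (hcpos (n+1)).le
            _ = c (n+1) := mul_one _
        constructor
        · rw [hδ]
          have htri := formNormCE_add_le hb hm hA.2 hBDQ
          have hs2 : Real.sqrt 2 ≤ 3 / 2 := by
            rw [show (3/2 : ℝ) = Real.sqrt ((3/2)^2) from (Real.sqrt_sq (by norm_num)).symm]
            exact Real.sqrt_le_sqrt (by norm_num)
          have hsum : formNorm b m (fun y => s ((n+1) + g) y - s (n+1) y)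
              + formNorm b m (fun y => κ * w (n+1) y) ≤ c (n+1) / 2 + c (n+1) := by
            linarith [hA.1, hBn]
          have hnn : (0:ℝ) ≤ formNorm b m (fun y => s ((n+1) + g) y - s (n+1) y)
              + formNorm b m (fun y => κ * w (n+1) y) :=
            add_nonneg (formNormCE_nonneg _) (formNormCE_nonneg _)
          have h1 : formNorm b m (fun y => (s ((n+1) + g) y - s (n+1) y) + κ * w (n+1) y)
              ≤ Real.sqrt 2 * (c (n+1) / 2 + c (n+1)) := by
            refine htri.trans ?_
            exact mul_le_mul_of_nonneg_left hsum (Real.sqrt_nonneg 2)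
          refine h1.trans ?_
          have hc1 := hcpos (n+1)
          have hceq := hcsucc n
          have hcn := hcpos n
          nlinarith [hs2, hc1, hceq]
        · rw [hδ]
          exact MemDQ.addCE hb hm hA.2 hBDQ
  -- the limit function
  have htermDQ : ∀ j, MemDQ b m (fun y => s (j+1) y - s j y) := fun j => (hgap 1 j).2
  have htermN : ∀ j, formNorm b m (fun y => s (j+1) y - s j y) ≤ c j / 2 := fun j => (hgap 1 j).1
  have hsummable : ∀ y, Summable (fun j => s (j+1) y - s j y) := by
    intro y
    apply Summable.of_norm_bounded (g := fun j => Real.sqrt ((m y)⁻¹) * (c j / 2))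
    · apply Summable.mul_left
      apply Summable.mul_right
      exact summable_geometric_of_lt_one (by norm_num) (by norm_num)
    · intro j
      calc ‖s (j+1) y - s j y‖ = |s (j+1) y - s j y| := rfl
        _ ≤ Real.sqrt ((m y)⁻¹) * formNorm b m (fun z => s (j+1) z - s j z) :=
            absCE_le hb hm (htermDQ j).1 y
        _ ≤ Real.sqrt ((m y)⁻¹) * (c j / 2) :=
            mul_le_mul_of_nonneg_left (htermN j) (Real.sqrt_nonneg _)
  set u : X → ℝ := fun y => ∑' j : ℕ, (s (j+1) y - s j y) with hu
  have htends : ∀ y, Tendsto (fun n => s n y) atTop (𝓝 (u y)) := by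
    intro y
    have h1 := (hsummable y).hasSum.tendsto_sum_nat
    have h2 : ∀ n, ∑ j ∈ Finset.range n, (s (j+1) y - s j y) = s n y := by
      intro n
      rw [Finset.sum_range_sub (fun j => s j y)]
      simp [hs0]
    simpa only [h2] using h1
  -- formNorm (s n) ≤ 1/2
  have hsn : ∀ n, formNorm b m (s n) ≤ 1 / 2 := by
    intro n
    have h := (hgap n 0).1
    have hz : (fun y => s (0 + n) y - s 0 y) = s n := by
      funext y
      simp [hs0]
    rw [hz] at h
    simpa [hc] using h
  -- u ∈ D(Q) via Fatou
  have huDQ : MemDQ b m u := by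
    constructor
    · refine (fatouCE (f := fun n y => s n y ^ 2 * m y) (B := 1)
        (fun n y => mul_nonneg (sq_nonneg _) (hm.pos y).le)
        (fun n => (hsDQ n).1) (fun n => ?_) (fun y => ?_)).1
      · refine (l2CE_le hb hm (s n)).trans ?_
        have h := hsn n
        nlinarith [formNormCE_nonneg (b := b) (m := m) (s n)]
      · exact ((htends y).pow 2).mul_const (m y)
    · refine (fatouCE (f := fun n (p : X × X) => b p.1 p.2 * (s n p.1 - s n p.2) ^ 2) (B := 1)
        (fun n p => mul_nonneg (hb.nonneg _ _) (sq_nonneg _))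
        (fun n => (hsDQ n).2) (fun n => ?_) (fun p => ?_)).1
      · refine (energyCE_le hb hm (s n)).trans ?_
        have h := hsn n
        nlinarith [formNormCE_nonneg (b := b) (m := m) (s n)]
      · exact (((htends p.1).sub (htends p.2)).pow 2).const_mul _
  -- contradiction with boundedness of u
  obtain ⟨M, hM⟩ := hcc u huDQ
  obtain ⟨n, hn⟩ := exists_nat_gt M

  have herr : |u (x (n+1)) - s (n+1) (x (n+1))| ≤ ν (x (n+1)) * (c (n+1) / 2) := by
    have hev : ∀ k, n + 1 ≤ k → |s k (x (n+1)) - s (n+1) (x (n+1))| ≤ ν (x (n+1)) * (c (n+1) / 2) := by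
      intro k hk
      obtain ⟨g, rfl⟩ := Nat.exists_eq_add_of_le hk
      have h1 := hνb _ (hgap g (n+1)).2 (x (n+1))
      have h2 := (hgap g (n+1)).1
      calc |s ((n+1)+g) (x (n+1)) - s (n+1) (x (n+1))|
          ≤ ν (x (n+1)) * formNorm b m (fun y => s ((n+1)+g) y - s (n+1) y) := h1
        _ ≤ ν (x (n+1)) * (c (n+1)/2) := mul_le_mul_of_nonneg_left h2 (hν0 (x (n+1)))
    have hT : Tendsto (fun k => |s k (x (n+1)) - s (n+1) (x (n+1))|) atTop
        (𝓝 |u (x (n+1)) - s (n+1) (x (n+1))|) := ((htends (x (n+1))).sub tendsto_const_nhds).abs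
    refine le_of_tendsto hT ?_
    filter_upwards [eventually_ge_atTop (n+1)] with k hk using hev k hk
  have h1 : c (n+1) * |w (n+1) (x (n+1))| ≤ |s (n+1) (x (n+1))| := hmain n
  have h3 : ν (x (n+1)) - 1 < |w (n+1) (x (n+1))| := hw3 (n+1)
  have h4 : (2:ℝ) * 5 ^ (n+1) * ((n:ℝ) + 3) < ν (x (n+1)) := by
    have h := hx (n+1)
    push_cast at h
    have e : (2:ℝ) * 5 ^ (n + 1) * ((n:ℝ) + 3) = 2 * 5 ^ (n + 1) * ((n:ℝ) + 1 + 2) := by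
      ring
    rw [e]
    exact h
  have h5 : c (n+1) * 5 ^ (n+1) = 1 := by
    rw [hc]
    rw [← mul_pow]
    norm_num
  have habs : |s (n+1) (x (n+1))| - |u (x (n+1)) - s (n+1) (x (n+1))| ≤ |u (x (n+1))| := by
    have h' := abs_sub_abs_le_abs_sub (s (n+1) (x (n+1))) (u (x (n+1)))
    have h'' : |s (n+1) (x (n+1)) - u (x (n+1))| = |u (x (n+1)) - s (n+1) (x (n+1))| := abs_sub_comm _ _
    linarith
  have hub := hM (x (n+1))
  have hcp := hcpos (n+1)
  have h6 : c (n+1) * (ν (x (n+1)) - 1) ≤ c (n+1) * |w (n+1) (x (n+1))| :=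
    mul_le_mul_of_nonneg_left h3.le hcp.le
  have h7 : c (n+1) * (2 * 5 ^ (n+1) * ((n:ℝ) + 3)) ≤ c (n+1) * ν (x (n+1)) :=
    mul_le_mul_of_nonneg_left h4.le hcp.le
  have h8 : c (n+1) * (2 * 5 ^ (n+1) * ((n:ℝ) + 3)) = 2 * ((n:ℝ) + 3) := by
    have : c (n+1) * (2 * 5 ^ (n+1) * ((n:ℝ) + 3))
        = 2 * ((n:ℝ) + 3) * (c (n+1) * 5 ^ (n+1)) := by ring
    rw [this, h5, mul_one]
  have hc1 : c (n+1) ≤ 1 := by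
    rw [hc]
    exact pow_le_one₀ (by norm_num) (by norm_num)
  have e1 : c (n+1) * (ν (x (n+1)) - 1) = c (n+1) * ν (x (n+1)) - c (n+1) := by ring
  have e2 : ν (x (n+1)) * (c (n+1) / 2) = c (n+1) * ν (x (n+1)) / 2 := by ring
  linarith

/-- compact embedding of `(D(Q), ‖·‖_Q)` into `ℓ²(X,m)`. -/
theorem stmt1 {X : Type*} [Countable X] (b : X → X → ℝ) (m : X → ℝ)
    (hb : IsGraph b) (hconn : GraphConnected b) (hm : FinMeasure m)
    (hcc : CanCompact b m) :
    ∀ u : ℕ → X → ℝ, (∀ n, MemDQ b m (u n)) →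
      (∃ M : ℝ, ∀ n, formNorm b m (u n) ≤ M) →
      ∃ φ : ℕ → ℕ, StrictMono φ ∧ ∃ v : X → ℝ, MemL2 m v ∧
        Filter.Tendsto (fun n => ∑' x, (u (φ n) x - v x) ^ 2 * m x)
          Filter.atTop (nhds 0) := by
  intro u hu ⟨M, hM⟩
  obtain ⟨C, hC0, hC⟩ := uniformBoundCE b m hb hm hcc
  have hM0 : 0 ≤ M := (formNormCE_nonneg (u 0)).trans (hM 0)
  set R := C * M with hR
  have hR0 : 0 ≤ R := mul_nonneg hC0 hM0
  have hbound : ∀ n x, |u n x| ≤ R := by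
    intro n x
    calc |u n x| ≤ C * formNorm b m (u n) := hC (u n) (hu n) x
      _ ≤ C * M := mul_le_mul_of_nonneg_left (hM n) hC0
  set K : Set (X → ℝ) := Set.pi Set.univ (fun _ : X => Set.Icc (-R) R) with hK
  have hKc : IsCompact K := isCompact_univ_pi fun _ => isCompact_Icc
  have hmem : ∀ n, u n ∈ K := by
    intro n
    rw [hK, Set.mem_univ_pi]
    intro x
    exact ⟨neg_le_of_abs_le (hbound n x), le_of_abs_le (hbound n x)⟩
  obtain ⟨v, hvK, φ, hφ, hconv⟩ := hKc.tendsto_subseq hmem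
  refine ⟨φ, hφ, v, ?_, ?_⟩
  · -- v ∈ ℓ²
    have hv : ∀ x, |v x| ≤ R := by
      intro x
      have := (Set.mem_univ_pi.1 hvK) x
      exact abs_le.2 ⟨this.1, this.2⟩
    apply Summable.of_nonneg_of_le
      (fun x => mul_nonneg (sq_nonneg _) (hm.pos x).le)
      (fun x => ?_) (hm.summable.mul_left (R ^ 2))
    have : v x ^ 2 ≤ R ^ 2 := sq_le_sq' (neg_le_of_abs_le (hv x)) (le_of_abs_le (hv x))
    exact mul_le_mul_of_nonneg_right this (hm.pos x).le
  · -- ℓ² convergence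
    have hpt : ∀ x, Tendsto (fun n => u (φ n) x) atTop (𝓝 (v x)) := by
      intro x
      exact tendsto_pi_nhds.1 hconv x
    have hv : ∀ x, |v x| ≤ R := by
      intro x
      have := (Set.mem_univ_pi.1 hvK) x
      exact abs_le.2 ⟨this.1, this.2⟩
    have := tendsto_tsum_of_dominated_convergence (𝓕 := atTop)
      (f := fun n x => (u (φ n) x - v x) ^ 2 * m x) (g := fun _ => (0:ℝ))
      (bound := fun x => (2 * R) ^ 2 * m x)
      (hm.summable.mul_left ((2 * R) ^ 2))
      (fun x => ?_) ?_
    · simpa using this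
    · have h1 : Tendsto (fun n => u (φ n) x - v x) atTop (𝓝 0) := by
        have := (hpt x).sub (tendsto_const_nhds (x := v x))
        simpa using this
      have h2 : Tendsto (fun n => (u (φ n) x - v x) ^ 2 * m x) atTop (𝓝 (0 ^ 2 * m x)) :=
        (h1.pow 2).mul_const (m x)
      simpa using h2
    · refine Eventually.of_forall fun n => fun x => ?_
      have h3 : |u (φ n) x - v x| ≤ 2 * R := by
        calc |u (φ n) x - v x| ≤ |u (φ n) x| + |v x| := abs_sub _ _
          _ ≤ R + R := add_le_add (hbound _ x) (hv x)
          _ = 2 * R := by ring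
      have h4 : (u (φ n) x - v x) ^ 2 ≤ (2 * R) ^ 2 := by
        nlinarith [abs_nonneg (u (φ n) x - v x), sq_abs (u (φ n) x - v x)]
      calc ‖(u (φ n) x - v x) ^ 2 * m x‖ = (u (φ n) x - v x) ^ 2 * m x := by
            rw [Real.norm_eq_abs, abs_of_nonneg (mul_nonneg (sq_nonneg _) (hm.pos x).le)]
        _ ≤ (2 * R) ^ 2 * m x := mul_le_mul_of_nonneg_right h4 (hm.pos x).le
end
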